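/- arXiv:2201.01766 — 3 statements merged into one kernel-verified Lean document; each statement's English description precedes it below -/
import Mathlib

section
/- Let 0<N₇<1 and 0<τ<1. Suppose J:(0,1/4]→[0,∞) is nondecreasing and satisfies J(R/4) ≤ (1 − (N₇/4)·(ln(100/R))^{τ−1})·J(R) for all 0<R≤1/4. Then for all 0<ρ<R≤1/4, J(ρ) ≤ exp(−(N₇/(4τ·ln 4))·((ln(100/ρ))^τ − (ln(100/R))^τ − 2))·J(R). -/
/-!
Put `P(r) = c · (log (100/r))^τ` with `c = N₇ / (4 τ log 4)`. Since `log (100/(r/4)) = log (100/r) + log 4`,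
concavity of `t ↦ t^τ` gives `P(r/4) ≤ P(r) + (N₇/4) (log (100/r))^(τ-1)`, and with `1 - x ≤ e^{-x}` the
hypothesis becomes `e^{P(r/4)} J(r/4) ≤ e^{P(r)} J(r)`. Iterating along `R/4ⁿ` and stopping at the first
`R/4ⁿ ≥ ρ` loses at most one step, which costs `N₇/4 ≤ 2c` in the exponent.
-/

open Real Set

lemma Real.rpow_add_le_rpow_add_mul_rpow_sub_one {L δ τ : ℝ} (hL : 0 < L) (hδ : 0 ≤ δ)
    (hτ : 0 ≤ τ) (hτ₁ : τ ≤ 1) :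
    (L + δ) ^ τ ≤ L ^ τ + τ * δ * L ^ (τ - 1) := by
  have hbern : (1 + δ / L) ^ τ ≤ 1 + τ * (δ / L) :=
    rpow_one_add_le_one_add_mul_self (by linarith [div_nonneg hδ hL.le]) hτ hτ₁
  calc (L + δ) ^ τ = L ^ τ * (1 + δ / L) ^ τ := by
        rw [← mul_rpow hL.le (by positivity)]
        congr 1
        field_simp
    _ ≤ L ^ τ * (1 + τ * (δ / L)) := by gcongr
    _ = L ^ τ + τ * δ * L ^ (τ - 1) := by
        rw [rpow_sub hL, rpow_one]
        field_simp

lemma Real.one_sub_mul_exp_le_exp {x a b : ℝ} (h : b ≤ a + x) : (1 - x) * exp b ≤ exp a :=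
  calc (1 - x) * exp b ≤ exp (-x) * exp b := by
        gcongr
        linarith [add_one_le_exp (-x)]
    _ ≤ exp a := by
        rw [← exp_add, exp_le_exp]
        linarith

lemma Real.log_four_lt_two : log 4 < 2 := by
  rw [log_four_eq]
  linarith [log_two_lt_d9]

lemma one_le_log_hundred_div {r : ℝ} (hr : r ∈ Ioc (0 : ℝ) (1 / 4)) : 1 ≤ log (100 / r) := by
  rw [le_log_iff_exp_le (div_pos (by norm_num) hr.1)]
  have h400 : (400 : ℝ) ≤ 100 / r := by rw [le_div_iff₀ hr.1]; linarith [hr.2]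
  linarith [exp_one_lt_d9]

lemma log_hundred_div_div_four {r : ℝ} (hr : r ≠ 0) :
    log (100 / (r / 4)) = log (100 / r) + log 4 := by
  rw [show 100 / (r / 4) = 100 / r * 4 by field_simp, log_mul (by positivity) (by norm_num)]

lemma div_four_pow_mem {R : ℝ} (hR : R ∈ Ioc (0 : ℝ) (1 / 4)) (n : ℕ) :
    R / 4 ^ n ∈ Ioc (0 : ℝ) (1 / 4) :=
  ⟨div_pos hR.1 (by positivity),
    (div_le_self hR.1.le (one_le_pow₀ (by norm_num))).trans hR.2⟩

noncomputable def iterationPotential (N₇ τ r : ℝ) : ℝ :=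
  N₇ / (4 * τ * log 4) * log (100 / r) ^ τ

section IterationPotential

variable {N₇ τ : ℝ}

lemma iterationPotential_anti (hN₇ : 0 ≤ N₇) (hτ : 0 < τ) {r s : ℝ}
    (hr : 0 < r) (hrs : r ≤ s) (hs : s ∈ Ioc (0 : ℝ) (1 / 4)) :
    iterationPotential N₇ τ s ≤ iterationPotential N₇ τ r := by
  have hlog : log (100 / s) ≤ log (100 / r) :=
    log_le_log (div_pos (by norm_num) hs.1) (div_le_div_of_nonneg_left (by norm_num) hr hrs)
  unfold iterationPotential
  gcongr
  linarith [one_le_log_hundred_div hs]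

lemma iterationPotential_div_four_le (hN₇ : 0 ≤ N₇) (hτ : 0 < τ) (hτ₁ : τ ≤ 1) {r : ℝ}
    (hr : r ∈ Ioc (0 : ℝ) (1 / 4)) :
    iterationPotential N₇ τ (r / 4) ≤
      iterationPotential N₇ τ r + N₇ / 4 * log (100 / r) ^ (τ - 1) := by
  have hlog4 : 0 < log 4 := log_pos (by norm_num)
  have hconcave := rpow_add_le_rpow_add_mul_rpow_sub_one
    (one_le_log_hundred_div hr |>.trans_lt' one_pos) hlog4.le hτ.le hτ₁
  unfold iterationPotential
  rw [log_hundred_div_div_four hr.1.ne']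
  calc N₇ / (4 * τ * log 4) * (log (100 / r) + log 4) ^ τ
      ≤ N₇ / (4 * τ * log 4) * (log (100 / r) ^ τ + τ * log 4 * log (100 / r) ^ (τ - 1)) := by
        gcongr
    _ = N₇ / (4 * τ * log 4) * log (100 / r) ^ τ + N₇ / 4 * log (100 / r) ^ (τ - 1) := by
        field_simp

lemma iterationPotential_le_of_div_four_le (hN₇ : 0 ≤ N₇) (hτ : 0 < τ) (hτ₁ : τ ≤ 1)
    {ρ r : ℝ} (hr : r ∈ Ioc (0 : ℝ) (1 / 4)) (hrρ : r / 4 ≤ ρ) (hρr : ρ ≤ r) :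
    iterationPotential N₇ τ ρ ≤ iterationPotential N₇ τ r + 2 * (N₇ / (4 * τ * log 4)) := by
  have hρ : iterationPotential N₇ τ ρ ≤ iterationPotential N₇ τ (r / 4) :=
    iterationPotential_anti hN₇ hτ (by linarith [hr.1]) hrρ
      ⟨by linarith [hr.1], hρr.trans hr.2⟩
  have hpow : log (100 / r) ^ (τ - 1) ≤ 1 :=
    rpow_le_one_of_one_le_of_nonpos (one_le_log_hundred_div hr) (by linarith)
  have hstep : N₇ / 4 ≤ 2 * (N₇ / (4 * τ * log 4)) := by
    rw [← mul_div_assoc, le_div_iff₀ (by positivity)]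
    have : τ * log 4 ≤ 2 := by nlinarith [log_four_lt_two]
    calc N₇ / 4 * (4 * τ * log 4) = N₇ * (τ * log 4) := by ring
      _ ≤ 2 * N₇ := by nlinarith
  calc iterationPotential N₇ τ ρ
      ≤ iterationPotential N₇ τ r + N₇ / 4 * log (100 / r) ^ (τ - 1) :=
        hρ.trans (iterationPotential_div_four_le hN₇ hτ hτ₁ hr)
    _ ≤ iterationPotential N₇ τ r + N₇ / 4 := by
        gcongr
        exact mul_le_of_le_one_right (by positivity) hpow
    _ ≤ iterationPotential N₇ τ r + 2 * (N₇ / (4 * τ * log 4)) := by gcongr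

variable {J : ℝ → ℝ}

lemma exp_iterationPotential_mul_div_four_le (hN₇ : 0 ≤ N₇) (hτ : 0 < τ) (hτ₁ : τ ≤ 1)
    (hJ : ∀ r ∈ Ioc (0 : ℝ) (1 / 4), 0 ≤ J r)
    (hiter : ∀ r ∈ Ioc (0 : ℝ) (1 / 4), J (r / 4) ≤ (1 - N₇ / 4 * log (100 / r) ^ (τ - 1)) * J r)
    {r : ℝ} (hr : r ∈ Ioc (0 : ℝ) (1 / 4)) :
    exp (iterationPotential N₇ τ (r / 4)) * J (r / 4) ≤ exp (iterationPotential N₇ τ r) * J r :=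
  calc exp (iterationPotential N₇ τ (r / 4)) * J (r / 4)
      ≤ exp (iterationPotential N₇ τ (r / 4)) * ((1 - N₇ / 4 * log (100 / r) ^ (τ - 1)) * J r) := by
        gcongr
        exact hiter r hr
    _ = (1 - N₇ / 4 * log (100 / r) ^ (τ - 1)) * exp (iterationPotential N₇ τ (r / 4)) * J r := by
        ring
    _ ≤ exp (iterationPotential N₇ τ r) * J r := by
        gcongr
        · exact hJ r hr
        · exact one_sub_mul_exp_le_exp (iterationPotential_div_four_le hN₇ hτ hτ₁ hr)

lemma le_exp_iterationPotential_sub_mul (hN₇ : 0 ≤ N₇) (hτ : 0 < τ) (hτ₁ : τ ≤ 1)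
    (hJ : ∀ r ∈ Ioc (0 : ℝ) (1 / 4), 0 ≤ J r)
    (hiter : ∀ r ∈ Ioc (0 : ℝ) (1 / 4), J (r / 4) ≤ (1 - N₇ / 4 * log (100 / r) ^ (τ - 1)) * J r)
    {R : ℝ} (hR : R ∈ Ioc (0 : ℝ) (1 / 4)) (n : ℕ) :
    J (R / 4 ^ n) ≤ exp (iterationPotential N₇ τ R - iterationPotential N₇ τ (R / 4 ^ n)) * J R := by
  have hanti : Antitone fun n : ℕ ↦ exp (iterationPotential N₇ τ (R / 4 ^ n)) * J (R / 4 ^ n) :=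
    antitone_nat_of_succ_le fun n ↦ by
      simpa only [pow_succ, div_mul_eq_div_div] using
        exp_iterationPotential_mul_div_four_le hN₇ hτ hτ₁ hJ hiter (div_four_pow_mem hR n)
  rw [exp_sub, div_mul_eq_mul_div, le_div_iff₀ (exp_pos _), mul_comm]
  simpa using hanti (Nat.zero_le n)

end IterationPotential

lemma exists_div_pow_div_lt_le {q ρ R : ℝ} (hq : 1 < q) (hρ : 0 < ρ) (hρR : ρ ≤ R) :
    ∃ n : ℕ, R / q ^ n / q < ρ ∧ ρ ≤ R / q ^ n := by
  obtain ⟨n, hle, hlt⟩ := exists_nat_pow_near ((one_le_div hρ).2 hρR) hq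
  have hqn : 0 < q ^ n := by positivity
  refine ⟨n, ?_, ?_⟩
  · rw [div_div, ← pow_succ, div_lt_iff₀ (by positivity)]
    rwa [div_lt_iff₀ hρ, mul_comm] at hlt
  · rw [le_div_iff₀ hqn]
    rwa [le_div_iff₀ hρ, mul_comm] at hle

theorem iteration_lemma_general (N₇ τ : ℝ) (hN₇ : 0 < N₇)
    (hτ : 0 < τ) (hτ' : τ < 1)
    (J : ℝ → ℝ)
    (hJnonneg : ∀ R ∈ Ioc (0:ℝ) (1/4), 0 ≤ J R)
    (hJmono : ∀ R₁ ∈ Ioc (0:ℝ) (1/4), ∀ R₂ ∈ Ioc (0:ℝ) (1/4), R₁ ≤ R₂ → J R₁ ≤ J R₂)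
    (hiter : ∀ R ∈ Ioc (0:ℝ) (1/4),
      J (R/4) ≤ (1 - N₇/4 * (Real.log (100/R)) ^ (τ - 1)) * J R) :
    ∀ ρ R : ℝ, 0 < ρ → ρ < R → R ≤ 1/4 →
      J ρ ≤ Real.exp (-(N₇ / (4 * τ * Real.log 4)) *
          ((Real.log (100/ρ)) ^ τ - (Real.log (100/R)) ^ τ - 2)) * J R := by
  intro ρ R hρ hρR hR
  have hRmem : R ∈ Ioc (0 : ℝ) (1 / 4) := ⟨hρ.trans hρR, hR⟩
  obtain ⟨n, hrρ, hρr⟩ := exists_div_pow_div_lt_le (by norm_num : (1 : ℝ) < 4) hρ hρR.le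
  have hr := div_four_pow_mem hRmem n
  calc J ρ ≤ J (R / 4 ^ n) := hJmono ρ ⟨hρ, hρr.trans hr.2⟩ _ hr hρr
    _ ≤ exp (iterationPotential N₇ τ R - iterationPotential N₇ τ (R / 4 ^ n)) * J R :=
        le_exp_iterationPotential_sub_mul hN₇.le hτ hτ'.le hJnonneg hiter hRmem n
    _ ≤ exp (iterationPotential N₇ τ R - iterationPotential N₇ τ ρ
          + 2 * (N₇ / (4 * τ * log 4))) * J R := by
        gcongr
        · exact hJnonneg R hRmem
        · linarith [iterationPotential_le_of_div_four_le hN₇.le hτ hτ'.le hr hrρ.le hρr]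
    _ = _ := by
        unfold iterationPotential
        ring_nf

/-- elementary iteration lemma. -/
theorem iteration_lemma (N₇ τ : ℝ) (hN₇ : 0 < N₇) (hN₇' : N₇ < 1)
    (hτ : 0 < τ) (hτ' : τ < 1)
    (J : ℝ → ℝ)
    (hJnonneg : ∀ R ∈ Ioc (0:ℝ) (1/4), 0 ≤ J R)
    (hJmono : ∀ R₁ ∈ Ioc (0:ℝ) (1/4), ∀ R₂ ∈ Ioc (0:ℝ) (1/4), R₁ ≤ R₂ → J R₁ ≤ J R₂)
    (hiter : ∀ R ∈ Ioc (0:ℝ) (1/4),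
      J (R/4) ≤ (1 - N₇/4 * (Real.log (100/R)) ^ (τ - 1)) * J R) :
    ∀ ρ R : ℝ, 0 < ρ → ρ < R → R ≤ 1/4 →
      J ρ ≤ Real.exp (-(N₇ / (4 * τ * Real.log 4)) *
          ((Real.log (100/ρ)) ^ τ - (Real.log (100/R)) ^ τ - 2)) * J R :=
  iteration_lemma_general N₇ τ hN₇ hτ hτ' J hJnonneg hJmono hiter
end

section
/- Let (X,μ) be a probability space, let M≥1, and let f:X→ℝ be measurable with 0<f≤M almost everywhere, with ∫f dμ>0 and with ln f ∈ L²(μ). Set ḡ=∫ ln f dμ and g=ln f − ḡ. Then |ln(∫f dμ) − ḡ| ≤ M·‖g‖_{L²(μ)} / ∫f dμ. -/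
open MeasureTheory

/-! With `I = ∫ f` and `g = ln f - ḡ`, Jensen's inequality for the concave `ln` gives
`0 ≤ ln I - ḡ`, and Jensen for the convex `t ↦ t ln t` gives `I (ln I - ḡ) ≤ ∫ f g`.
Then `∫ f g ≤ M ∫ |g| ≤ M ‖g‖₂`, the last step by Cauchy–Schwarz on a probability space. -/

namespace MeasureTheory

variable {X : Type*} [MeasurableSpace X] {μ : Measure X} {f g : X → ℝ}

theorem integral_mul_le_mul_integral_abs {M : ℝ} (hfm : AEStronglyMeasurable f μ)
    (hfM : ∀ᵐ x ∂μ, |f x| ≤ M) (hg : Integrable g μ) :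
    ∫ x, f x * g x ∂μ ≤ M * ∫ x, |g x| ∂μ := by
  rw [← integral_const_mul]
  refine integral_mono_ae (hg.bdd_mul hfm hfM) (hg.abs.const_mul M) ?_
  filter_upwards [hfM] with x hx
  calc f x * g x ≤ |f x| * |g x| := by rw [← abs_mul]; exact le_abs_self _
    _ ≤ M * |g x| := mul_le_mul_of_nonneg_right hx (abs_nonneg _)

variable [IsProbabilityMeasure μ]

/- `ConcaveOn.le_map_integral` needs a closed domain, on which `log` is not concave, so we
integrate the tangent line bound `log t ≤ log I + t / I - 1` at `I = ∫ f` instead. -/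
theorem integral_log_le_log_integral (hf : ∀ᵐ x ∂μ, 0 < f x) (hfi : Integrable f μ)
    (hlogi : Integrable (fun x => Real.log (f x)) μ) (hpos : 0 < ∫ x, f x ∂μ) :
    ∫ x, Real.log (f x) ∂μ ≤ Real.log (∫ x, f x ∂μ) := by
  set I := ∫ x, f x ∂μ
  have htangent : ∀ᵐ x ∂μ, Real.log (f x) ≤ f x / I + (Real.log I - 1) := by
    filter_upwards [hf] with x hx
    have h := Real.log_le_sub_one_of_pos (div_pos hx hpos)
    rw [Real.log_div hx.ne' hpos.ne'] at h
    linarith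
  calc ∫ x, Real.log (f x) ∂μ ≤ ∫ x, (f x / I + (Real.log I - 1)) ∂μ :=
        integral_mono_ae hlogi ((hfi.div_const I).add (integrable_const _)) htangent
    _ = Real.log I := by
        rw [integral_add (hfi.div_const I) (integrable_const _), integral_div, integral_const,
          probReal_univ, one_smul, div_self hpos.ne']
        ring

theorem mul_log_integral_sub_le_integral_mul_log_sub (c : ℝ) (hf : ∀ᵐ x ∂μ, 0 ≤ f x)
    (hfi : Integrable f μ) (hflogi : Integrable (fun x => f x * Real.log (f x)) μ) :
    (∫ x, f x ∂μ) * (Real.log (∫ x, f x ∂μ) - c) ≤ ∫ x, f x * (Real.log (f x) - c) ∂μ := by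
  have hjensen : (∫ x, f x ∂μ) * Real.log (∫ x, f x ∂μ) ≤ ∫ x, f x * Real.log (f x) ∂μ :=
    Real.convexOn_mul_log.map_integral_le Real.continuous_mul_log.continuousOn isClosed_Ici
      hf hfi hflogi
  simp_rw [mul_sub]
  rw [integral_sub hflogi (hfi.mul_const c), integral_mul_const]
  linarith

theorem sq_integral_le_integral_sq (hg : MemLp g 2 μ) : (∫ x, g x ∂μ) ^ 2 ≤ ∫ x, g x ^ 2 ∂μ := by
  have h := ProbabilityTheory.variance_nonneg g μ
  rw [ProbabilityTheory.variance_eq_sub hg] at h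
  simpa using h

theorem integral_abs_le_sqrt_integral_sq (hg : MemLp g 2 μ) :
    ∫ x, |g x| ∂μ ≤ (∫ x, g x ^ 2 ∂μ) ^ ((1 : ℝ) / 2) := by
  have h : (∫ x, |g x| ∂μ) ^ 2 ≤ ∫ x, g x ^ 2 ∂μ := by
    simpa only [Pi.abs_apply, sq_abs] using sq_integral_le_integral_sq hg.abs
  rw [← Real.sqrt_eq_rpow]
  exact Real.le_sqrt_of_sq_le h

end MeasureTheory

/-- Nash-type logarithmic inequality on a probability space. -/
theorem nash_inequality {X : Type*} [MeasurableSpace X] (μ : Measure X)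
    [IsProbabilityMeasure μ] (M : ℝ) (hM : 1 ≤ M) (f : X → ℝ)
    (hmeas : Measurable f)
    (hbdd : ∀ᵐ x ∂μ, 0 < f x ∧ f x ≤ M)
    (hpos : 0 < ∫ x, f x ∂μ)
    (hlog : MemLp (fun x => Real.log (f x)) 2 μ) :
    |Real.log (∫ x, f x ∂μ) - ∫ x, Real.log (f x) ∂μ| ≤
      M * (∫ x, (Real.log (f x) - ∫ y, Real.log (f y) ∂μ) ^ 2 ∂μ) ^ ((1:ℝ)/2)
        / ∫ x, f x ∂μ := by
  have hfM : ∀ᵐ x ∂μ, |f x| ≤ M := by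
    filter_upwards [hbdd] with x hx
    rw [abs_of_pos hx.1]
    exact hx.2
  have hfi : Integrable f μ := .of_bound hmeas.aestronglyMeasurable M hfM
  have hlogi := hlog.integrable one_le_two
  set G := ∫ x, Real.log (f x) ∂μ
  have hjensen : G ≤ Real.log (∫ x, f x ∂μ) :=
    integral_log_le_log_integral (hbdd.mono fun _ hx => hx.1) hfi hlogi hpos
  rw [abs_of_nonneg (sub_nonneg.2 hjensen), le_div_iff₀ hpos, mul_comm]
  calc (∫ x, f x ∂μ) * (Real.log (∫ x, f x ∂μ) - G)
      ≤ ∫ x, f x * (Real.log (f x) - G) ∂μ :=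
        mul_log_integral_sub_le_integral_mul_log_sub G (hbdd.mono fun _ hx => hx.1.le) hfi
          (hlogi.bdd_mul hmeas.aestronglyMeasurable hfM)
    _ ≤ M * ∫ x, |Real.log (f x) - G| ∂μ :=
        integral_mul_le_mul_integral_abs hmeas.aestronglyMeasurable hfM
          (hlogi.sub (integrable_const G))
    _ ≤ M * (∫ x, (Real.log (f x) - G) ^ 2 ∂μ) ^ ((1:ℝ)/2) :=
        mul_le_mul_of_nonneg_left (integral_abs_le_sqrt_integral_sq (hlog.sub (memLp_const G)))
          (by linarith)
end

section
/- Let 1≤p<∞ and R>0. Let λ:[0,1)→[0,1] be nonincreasing, set Λ(x)=λ(|x|) for x in the unit ball B(1)⊂ℝ³, and assume ∫_{B(1)}Λ dx=1; define Λ_R(x)=R^{−3}Λ(x/R) for x∈B(R). Then for every continuously differentiable function f on the closed ball of radius R, ∫_{B(R)} | f(x) − ∫_{B(R)} f(y)Λ_R(y) dy |^p · Λ_R(x) dx ≤ 2^{p+6}·R^p·∫_{B(R)} |∇f(x)|^p · Λ_R(x) dx. -/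
open Real MeasureTheory Set
noncomputable section

abbrev E3 := EuclideanSpace ℝ (Fin 3)

/-!
Both sides are integrals against the probability measure `ν = Λ_R dx` on the ball. By Jensen,
`∫ |f - ∫ f dν|^p dν ≤ ∬ |f x - f y|^p dν dν`, and the fundamental theorem of calculus along the
segment from `x` to `y`, followed by Jensen on `[0, 1]`, bounds `|f x - f y|^p` by `(2R)^p` times
the mean of `|∇f|^p` over the segment. Splitting the segment at its midpoint and using the symmetry
`x ↔ y`, only the half `t ∈ [1/2, 1]` next to `y` has to be controlled. There the point
`z = (1 - t) x + t y` has `|z| ≤ max |x| |y|`, so monotonicity of `λ ≤ 1` gives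
`Λ_R(x) Λ_R(y) ≤ R⁻³ Λ_R(z)`, and for fixed `x` and `t` the map `y ↦ z` scales volume by
`t³ ≥ 1/8`. This bounds the `y`-integral by `8 R⁻³ ∫ |∇f|^p Λ_R`, and the `x`-integral costs the
volume `4πR³/3 ≤ 8R³` of the ball.
-/

open Metric Module

section Jensen

variable {α : Type*} [MeasurableSpace α] {ν : Measure α} [IsProbabilityMeasure ν]

theorem rpow_integral_le_integral_rpow {h : α → ℝ} {p C : ℝ} (hp : 1 ≤ p)
    (hm : AEStronglyMeasurable h ν) (h0 : ∀ᵐ a ∂ν, 0 ≤ h a) (hC : ∀ᵐ a ∂ν, h a ≤ C) :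
    (∫ a, h a ∂ν) ^ p ≤ ∫ a, h a ^ p ∂ν := by
  have hp0 : 0 ≤ p := zero_le_one.trans hp
  have hbound : ∀ᵐ a ∂ν, ‖h a‖ ≤ C := by
    filter_upwards [h0, hC] with a ha haC
    rwa [Real.norm_of_nonneg ha]
  refine (convexOn_rpow hp).map_integral_le (continuous_rpow_const hp0).continuousOn
    isClosed_Ici h0 (.of_bound hm C hbound) (.of_bound ?_ (C ^ p) ?_)
  · exact (continuous_rpow_const hp0).comp_aestronglyMeasurable hm
  · filter_upwards [h0, hbound] with a ha haC
    change ‖h a ^ p‖ ≤ C ^ p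
    rw [Real.norm_of_nonneg (rpow_nonneg ha p)]
    exact rpow_le_rpow ha ((le_abs_self _).trans haC) hp0

theorem abs_sub_integral_rpow_le {f : α → ℝ} {p M : ℝ} (hp : 1 ≤ p)
    (hm : AEStronglyMeasurable f ν) (hM : ∀ᵐ a ∂ν, |f a| ≤ M) (x : α) :
    |f x - ∫ y, f y ∂ν| ^ p ≤ ∫ y, |f x - f y| ^ p ∂ν := by
  have hf : Integrable f ν := .of_bound hm M (by simpa only [Real.norm_eq_abs] using hM)
  have hmean : f x - ∫ y, f y ∂ν = ∫ y, (f x - f y) ∂ν := by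
    rw [integral_sub (integrable_const _) hf, integral_const, probReal_univ, one_smul]
  calc |f x - ∫ y, f y ∂ν| ^ p ≤ (∫ y, |f x - f y| ∂ν) ^ p := by
        rw [hmean]
        exact rpow_le_rpow (abs_nonneg _) abs_integral_le_integral_abs (by linarith)
    _ ≤ ∫ y, |f x - f y| ^ p ∂ν :=
        rpow_integral_le_integral_rpow (C := |f x| + M) hp
          (continuous_abs.comp_aestronglyMeasurable (aestronglyMeasurable_const.sub hm))
          (.of_forall fun _ => abs_nonneg _)
          (hM.mono fun y hy => (abs_sub _ _).trans (by linarith))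

theorem integral_abs_sub_integral_rpow_le_integral_prod {f : α → ℝ} {p M : ℝ} (hp : 1 ≤ p)
    (hm : AEStronglyMeasurable f ν) (hM : ∀ᵐ a ∂ν, |f a| ≤ M) :
    ∫ x, |f x - ∫ y, f y ∂ν| ^ p ∂ν ≤ ∫ q, |f q.1 - f q.2| ^ p ∂ν.prod ν := by
  have hp0 : 0 ≤ p := zero_le_one.trans hp
  have hint : Integrable (fun q : α × α => |f q.1 - f q.2| ^ p) (ν.prod ν) := by
    refine .of_bound ?_ ((2 * M) ^ p) ?_
    · exact (continuous_rpow_const hp0).comp_aestronglyMeasurable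
        (continuous_abs.comp_aestronglyMeasurable (hm.comp_fst.sub hm.comp_snd))
    · filter_upwards [Measure.quasiMeasurePreserving_fst.ae hM,
        Measure.quasiMeasurePreserving_snd.ae hM] with q h1 h2
      rw [Real.norm_of_nonneg (rpow_nonneg (abs_nonneg _) p)]
      exact rpow_le_rpow (abs_nonneg _) ((abs_sub _ _).trans (by linarith)) hp0
  rw [integral_prod _ hint]
  exact integral_mono_of_nonneg (.of_forall fun _ => rpow_nonneg (abs_nonneg _) p)
    hint.integral_prod_left (.of_forall (abs_sub_integral_rpow_le hp hm hM))

end Jensen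

section MeasureLemmas

variable {α : Type*} [MeasurableSpace α] {μ : Measure α} {w : α → ℝ}

theorem isProbabilityMeasure_withDensity_ofReal (hw0 : 0 ≤ᵐ[μ] w) (hw1 : ∫ x, w x ∂μ = 1) :
    IsProbabilityMeasure (μ.withDensity fun x => ENNReal.ofReal (w x)) := by
  constructor
  rw [withDensity_apply _ MeasurableSet.univ, Measure.restrict_univ,
    ← ofReal_integral_eq_lintegral_ofReal (.of_integral_ne_zero (by simp [hw1])) hw0, hw1,
    ENNReal.ofReal_one]

theorem integral_withDensity_ofReal (hw : Measurable w) (hw0 : ∀ x, 0 ≤ w x) (φ : α → ℝ) :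
    ∫ x, φ x ∂μ.withDensity (fun x => ENNReal.ofReal (w x)) = ∫ x, w x * φ x ∂μ := by
  rw [integral_withDensity_eq_integral_toReal_smul hw.ennreal_ofReal
    (.of_forall fun _ => ENNReal.ofReal_lt_top)]
  simp only [ENNReal.toReal_ofReal (hw0 _), smul_eq_mul]

theorem ae_mem_prod_of_ae_mem {β : Type*} [MeasurableSpace β] {ν : Measure β} [SFinite μ]
    [SFinite ν] {s : Set α} {t : Set β} (hs : ∀ᵐ x ∂μ, x ∈ s) (ht : ∀ᵐ y ∂ν, y ∈ t) :
    ∀ᵐ q ∂μ.prod ν, q ∈ s ×ˢ t := by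
  filter_upwards [Measure.quasiMeasurePreserving_fst.ae hs,
    Measure.quasiMeasurePreserving_snd.ae ht] with q h1 h2 using ⟨h1, h2⟩

theorem ContinuousOn.integrable_of_isCompact_of_ae_mem [TopologicalSpace α] [T2Space α]
    [OpensMeasurableSpace α] [IsFiniteMeasure μ] {F : α → ℝ} {s : Set α} (hs : IsCompact s)
    (hF : ContinuousOn F s) (hμ : ∀ᵐ x ∂μ, x ∈ s) : Integrable F μ := by
  rw [← Measure.restrict_eq_self_of_ae_mem hμ]
  exact hF.integrableOn_compact hs

end MeasureLemmas

theorem AntitoneOn.exists_antitone_extension_mapsTo_Icc {α : Type*} [LinearOrder α]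
    {lam : α → ℝ} {s : Set α} {a b : ℝ} (hmono : AntitoneOn lam s)
    (hrange : MapsTo lam s (Icc a b)) (hab : a ≤ b) :
    ∃ g : α → ℝ, Antitone g ∧ (∀ x, g x ∈ Icc a b) ∧ EqOn lam g s := by
  obtain ⟨g, hg, hlam⟩ := hmono.exists_antitone_extension
    ⟨a, forall_mem_image.2 fun _ hx => (hrange hx).1⟩
    ⟨b, forall_mem_image.2 fun _ hx => (hrange hx).2⟩
  refine ⟨fun x => max a (min b (g x)),
    fun x y hxy => max_le_max le_rfl (min_le_min le_rfl (hg hxy)),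
    fun x => ⟨le_max_left _ _, max_le hab (min_le_left _ _)⟩, fun x hx => ?_⟩
  simp only [← hlam hx, min_eq_right (hrange hx).2, max_eq_right (hrange hx).1]

section Segment

variable {E : Type*} [NormedAddCommGroup E] [NormedSpace ℝ E]

theorem Antitone.mul_le_comp_norm_segment {g : ℝ → ℝ} (hg : Antitone g)
    (hg01 : ∀ s, g s ∈ Icc (0:ℝ) 1) (x y : E) {t : ℝ} (ht : t ∈ Icc (0:ℝ) 1) :
    g ‖x‖ * g ‖y‖ ≤ g ‖(1 - t) • x + t • y‖ := by
  have hz : ‖(1 - t) • x + t • y‖ ≤ max ‖x‖ ‖y‖ :=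
    (convexOn_norm convex_univ).le_on_segment' (mem_univ x) (mem_univ y) (by linarith [ht.2])
      ht.1 (by ring)
  calc g ‖x‖ * g ‖y‖ ≤ min (g ‖x‖) (g ‖y‖) :=
        le_min (mul_le_of_le_one_right (hg01 _).1 (hg01 _).2)
          (mul_le_of_le_one_left (hg01 _).1 (hg01 _).2)
    _ = g (max ‖x‖ ‖y‖) := hg.map_max.symm
    _ ≤ g ‖(1 - t) • x + t • y‖ := hg hz

theorem abs_sub_le_norm_mul_integral_norm_fderiv {f : E → ℝ} {f' : E → E →L[ℝ] ℝ} {U : Set E}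
    (hU : Convex ℝ U) (hf : ∀ z ∈ U, HasFDerivAt f (f' z) z) (hf' : ContinuousOn f' U)
    {x y : E} (hx : x ∈ U) (hy : y ∈ U) :
    |f x - f y| ≤ ‖y - x‖ * ∫ t in Ioc (0:ℝ) 1, ‖f' ((1 - t) • x + t • y)‖ := by
  set γ : ℝ → E := fun t => (1 - t) • x + t • y
  have hγU : MapsTo γ (Icc 0 1) U := fun t ht => hU hx hy (by linarith [ht.2]) ht.1 (by ring)
  have hγ' (t : ℝ) : HasDerivAt γ (y - x) t := by
    convert ((hasDerivAt_id t).smul_const (y - x)).const_add x using 1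
    · ext s
      simp only [γ, id, smul_sub, sub_smul, one_smul]
      abel
    · simp
  have hf'γ : ContinuousOn (fun t => f' (γ t)) (Icc 0 1) := hf'.comp (by fun_prop) hγU
  have hFTC : f y - f x = ∫ t in Ioc (0:ℝ) 1, f' (γ t) (y - x) := by
    have hderiv : ∀ t ∈ uIcc (0:ℝ) 1, HasDerivAt (fun s => f (γ s)) (f' (γ t) (y - x)) t :=
      fun t ht => (hf _ (hγU (by rwa [uIcc_of_le zero_le_one] at ht))).comp_hasDerivAt t (hγ' t)
    have hcont : ContinuousOn (fun t => f' (γ t) (y - x)) (uIcc 0 1) := by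
      rw [uIcc_of_le zero_le_one]
      exact hf'γ.clm_apply continuousOn_const
    rw [← intervalIntegral.integral_of_le zero_le_one,
      intervalIntegral.integral_eq_sub_of_hasDerivAt hderiv hcont.intervalIntegrable]
    simp [γ]
  rw [abs_sub_comm, hFTC, ← integral_const_mul, ← Real.norm_eq_abs]
  refine norm_integral_le_of_norm_le (g := fun t => ‖y - x‖ * ‖f' (γ t)‖)
    ((continuousOn_const.mul hf'γ.norm).integrableOn_Icc.mono_set Ioc_subset_Icc_self) ?_
  filter_upwards with t
  rw [mul_comm]
  exact (f' (γ t)).le_opNorm (y - x)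

theorem abs_sub_rpow_le_norm_rpow_mul_integral {f : E → ℝ} {f' : E → E →L[ℝ] ℝ} {U : Set E}
    (hU : Convex ℝ U) (hf : ∀ z ∈ U, HasFDerivAt f (f' z) z) (hf' : ContinuousOn f' U)
    {x y : E} (hx : x ∈ U) (hy : y ∈ U) {p : ℝ} (hp : 1 ≤ p) :
    |f x - f y| ^ p ≤ ‖y - x‖ ^ p * ∫ t in Ioc (0:ℝ) 1, ‖f' ((1 - t) • x + t • y)‖ ^ p := by
  set A : ℝ → ℝ := fun t => ‖f' ((1 - t) • x + t • y)‖
  have hA : ContinuousOn A (Icc 0 1) := (hf'.comp (by fun_prop) fun t ht =>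
    hU hx hy (by linarith [ht.2]) ht.1 (by ring)).norm
  obtain ⟨C, hC⟩ := isCompact_Icc.exists_bound_of_continuousOn hA
  have : IsProbabilityMeasure (volume.restrict (Ioc (0:ℝ) 1)) := ⟨by simp⟩
  have hjensen : (∫ t in Ioc (0:ℝ) 1, A t) ^ p ≤ ∫ t in Ioc (0:ℝ) 1, A t ^ p :=
    rpow_integral_le_integral_rpow hp
      ((hA.mono Ioc_subset_Icc_self).aestronglyMeasurable measurableSet_Ioc)
      (.of_forall fun _ => norm_nonneg _)
      ((ae_restrict_mem measurableSet_Ioc).mono fun t ht =>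
        (le_abs_self _).trans (hC t (Ioc_subset_Icc_self ht)))
  calc |f x - f y| ^ p ≤ (‖y - x‖ * ∫ t in Ioc (0:ℝ) 1, A t) ^ p :=
        rpow_le_rpow (abs_nonneg _)
          (abs_sub_le_norm_mul_integral_norm_fderiv hU hf hf' hx hy) (by linarith)
    _ = ‖y - x‖ ^ p * (∫ t in Ioc (0:ℝ) 1, A t) ^ p :=
        mul_rpow (norm_nonneg _) (setIntegral_nonneg measurableSet_Ioc fun _ _ => norm_nonneg _)
    _ ≤ ‖y - x‖ ^ p * ∫ t in Ioc (0:ℝ) 1, A t ^ p :=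
        mul_le_mul_of_nonneg_left hjensen (rpow_nonneg (norm_nonneg _) p)

theorem integral_Ioc_segment_eq_add {φ : E → ℝ} {x y : E}
    (hφ : IntervalIntegrable (fun t => φ ((1 - t) • x + t • y)) volume 0 1) :
    ∫ t in Ioc (0:ℝ) 1, φ ((1 - t) • x + t • y) =
      (∫ t in Ioc (2⁻¹:ℝ) 1, φ ((1 - t) • y + t • x)) +
        ∫ t in Ioc (2⁻¹:ℝ) 1, φ ((1 - t) • x + t • y) := by
  have hreflect : ∫ t in (0:ℝ)..2⁻¹, φ ((1 - t) • x + t • y) =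
      ∫ t in (2⁻¹:ℝ)..1, φ ((1 - t) • y + t • x) := by
    have := intervalIntegral.integral_comp_sub_left
      (fun u => φ ((1 - u) • y + u • x)) (a := 0) (b := 2⁻¹) (1 : ℝ)
    rw [sub_zero, show (1:ℝ) - 2⁻¹ = 2⁻¹ by norm_num] at this
    rw [← this]
    congr 1 with t
    rw [sub_sub_cancel, add_comm]
  rw [← intervalIntegral.integral_of_le zero_le_one,
    ← intervalIntegral.integral_of_le (by norm_num : (2⁻¹:ℝ) ≤ 1),
    ← intervalIntegral.integral_of_le (by norm_num : (2⁻¹:ℝ) ≤ 1),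
    ← intervalIntegral.integral_add_adjacent_intervals (b := 2⁻¹)
      (hφ.mono_set (uIcc_subset_uIcc left_mem_uIcc (by rw [mem_uIcc]; norm_num)))
      (hφ.mono_set (uIcc_subset_uIcc (by rw [mem_uIcc]; norm_num) right_mem_uIcc)),
    hreflect]

theorem ContDiffOn.continuousOn_fderivWithin_closedBall {F : Type*} [NormedAddCommGroup F]
    [NormedSpace ℝ F] {f : E → F} {c : E} {R : ℝ} (hR : 0 < R)
    (hf : ContDiffOn ℝ 1 f (closedBall c R)) :
    ContinuousOn (fderivWithin ℝ f (closedBall c R)) (closedBall c R) :=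
  hf.continuousOn_fderivWithin (uniqueDiffOn_convex (convex_closedBall c R)
    (by rw [interior_closedBall c hR.ne']; exact nonempty_ball.2 hR)) le_rfl

theorem abs_sub_rpow_le_integral_halfSegment {f : E → ℝ} {R p : ℝ} (hp : 1 ≤ p)
    (hf : ContDiffOn ℝ 1 f (closedBall 0 R)) {x y : E} (hx : x ∈ ball 0 R) (hy : y ∈ ball 0 R) :
    |f x - f y| ^ p ≤ (2 * R) ^ p *
      ((∫ t in Ioc (2⁻¹:ℝ) 1, ‖fderivWithin ℝ f (closedBall 0 R) ((1 - t) • y + t • x)‖ ^ p) +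
        ∫ t in Ioc (2⁻¹:ℝ) 1, ‖fderivWithin ℝ f (closedBall 0 R) ((1 - t) • x + t • y)‖ ^ p) := by
  have hR : 0 < R := pos_of_mem_ball hx
  set f' := fderivWithin ℝ f (closedBall 0 R)
  have hf' : ContinuousOn f' (closedBall 0 R) := hf.continuousOn_fderivWithin_closedBall hR
  have hderiv : ∀ z ∈ ball (0:E) R, HasFDerivAt f (f' z) z := fun z hz =>
    ((hf.differentiableOn one_ne_zero z (ball_subset_closedBall hz)).hasFDerivWithinAt).hasFDerivAt
      (closedBall_mem_nhds_of_mem hz)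
  have hsegment : ContinuousOn (fun t : ℝ => ‖f' ((1 - t) • x + t • y)‖ ^ p) (uIcc 0 1) := by
    rw [uIcc_of_le zero_le_one]
    refine ((hf'.mono ball_subset_closedBall).comp (by fun_prop) fun t ht => ?_).norm.rpow_const
      fun _ _ => Or.inr (by linarith)
    exact convex_ball (0:E) R hx hy (by linarith [ht.2]) ht.1 (by ring)
  have hyx : ‖y - x‖ ≤ 2 * R := by
    rw [mem_ball_zero_iff] at hx hy
    linarith [norm_sub_le y x]
  calc |f x - f y| ^ p ≤ ‖y - x‖ ^ p * ∫ t in Ioc (0:ℝ) 1, ‖f' ((1 - t) • x + t • y)‖ ^ p :=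
        abs_sub_rpow_le_norm_rpow_mul_integral (convex_ball 0 R) hderiv
          (hf'.mono ball_subset_closedBall) hx hy hp
    _ = ‖y - x‖ ^ p * ((∫ t in Ioc (2⁻¹:ℝ) 1, ‖f' ((1 - t) • y + t • x)‖ ^ p) +
          ∫ t in Ioc (2⁻¹:ℝ) 1, ‖f' ((1 - t) • x + t • y)‖ ^ p) := by
        rw [integral_Ioc_segment_eq_add (φ := fun z => ‖f' z‖ ^ p) hsegment.intervalIntegrable]
    _ ≤ _ := by gcongr

theorem mul_mul_integral_halfSegment_le {φ w : E → ℝ} {K : ℝ} (hφ0 : ∀ z, 0 ≤ φ z)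
    (hw0 : ∀ z, 0 ≤ w z) {x y : E}
    (hseg : ∀ t ∈ Icc (0:ℝ) 1, w x * w y ≤ K * w ((1 - t) • x + t • y))
    (hint : IntegrableOn (fun t => φ ((1 - t) • x + t • y) * w ((1 - t) • x + t • y))
      (Ioc (2⁻¹:ℝ) 1)) :
    w x * (w y * ∫ t in Ioc (2⁻¹:ℝ) 1, φ ((1 - t) • x + t • y)) ≤
      K * ∫ t in Ioc (2⁻¹:ℝ) 1, φ ((1 - t) • x + t • y) * w ((1 - t) • x + t • y) := by
  rw [← integral_const_mul, ← integral_const_mul, ← integral_const_mul]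
  refine integral_mono_of_nonneg
    (.of_forall fun t => mul_nonneg (hw0 x) (mul_nonneg (hw0 y) (hφ0 _))) (hint.const_mul K) ?_
  filter_upwards [ae_restrict_mem measurableSet_Ioc] with t ht
  calc w x * (w y * φ ((1 - t) • x + t • y))
      = w x * w y * φ ((1 - t) • x + t • y) := by ring
    _ ≤ K * w ((1 - t) • x + t • y) * φ ((1 - t) • x + t • y) :=
        mul_le_mul_of_nonneg_right (hseg t ⟨by linarith [ht.1], ht.2⟩) (hφ0 _)
    _ = K * (φ ((1 - t) • x + t • y) * w ((1 - t) • x + t • y)) := by ring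

end Segment

section Haar

variable {E : Type*} [NormedAddCommGroup E] [NormedSpace ℝ E] [FiniteDimensional ℝ E]
  [MeasurableSpace E] [BorelSpace E]

theorem integrable_integral_halfSegment {ν : Measure E} [IsFiniteMeasure ν] {φ : E → ℝ}
    {s : Set E} (hs : IsCompact s) (hsc : Convex ℝ s) (hφ : ContinuousOn φ s)
    (hν : ∀ᵐ x ∂ν, x ∈ s) :
    Integrable (fun q : E × E => ∫ t in Ioc (2⁻¹:ℝ) 1, φ ((1 - t) • q.1 + t • q.2)) (ν.prod ν) := by
  have hcont : ContinuousOn (fun q : (E × E) × ℝ => φ ((1 - q.2) • q.1.1 + q.2 • q.1.2))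
      ((s ×ˢ s) ×ˢ Icc (2⁻¹:ℝ) 1) :=
    hφ.comp (by fun_prop) fun q hq =>
      hsc hq.1.1 hq.1.2 (by linarith [hq.2.2]) (by linarith [hq.2.1]) (by ring)
  have hae : ∀ᵐ q ∂(ν.prod ν).prod (volume.restrict (Ioc (2⁻¹:ℝ) 1)),
      q ∈ (s ×ˢ s) ×ˢ Icc (2⁻¹:ℝ) 1 :=
    ae_mem_prod_of_ae_mem (ae_mem_prod_of_ae_mem hν hν)
      ((ae_restrict_mem measurableSet_Ioc).mono fun _ ht => Ioc_subset_Icc_self ht)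
  exact (hcont.integrable_of_isCompact_of_ae_mem ((hs.prod hs).prod isCompact_Icc) hae)
    |>.integral_prod_left

theorem integral_prod_abs_sub_rpow_le {ν : Measure E} [IsFiniteMeasure ν] {f : E → ℝ}
    {p R : ℝ} (hp : 1 ≤ p) (hR : 0 < R) (hf : ContDiffOn ℝ 1 f (closedBall 0 R))
    (hν : ∀ᵐ x ∂ν, x ∈ ball (0:E) R) :
    ∫ q, |f q.1 - f q.2| ^ p ∂ν.prod ν ≤ (2 * R) ^ p * (2 * ∫ x, ∫ y,
      (∫ t in Ioc (2⁻¹:ℝ) 1, ‖fderivWithin ℝ f (closedBall 0 R) ((1 - t) • x + t • y)‖ ^ p)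
        ∂ν ∂ν) := by
  set T : E → E → ℝ := fun x y =>
    ∫ t in Ioc (2⁻¹:ℝ) 1, ‖fderivWithin ℝ f (closedBall 0 R) ((1 - t) • x + t • y)‖ ^ p
  have hT : Integrable (fun q : E × E => T q.1 q.2) (ν.prod ν) :=
    integrable_integral_halfSegment (isCompact_closedBall 0 R) (convex_closedBall 0 R)
      ((hf.continuousOn_fderivWithin_closedBall hR).norm.rpow_const
        fun _ _ => Or.inr (by linarith))
      (hν.mono fun _ hx => ball_subset_closedBall hx)
  have hTswap : Integrable (fun q : E × E => T q.2 q.1) (ν.prod ν) :=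
    Integrable.swap (f := fun q : E × E => T q.1 q.2) hT
  have hswap : ∫ q, T q.2 q.1 ∂ν.prod ν = ∫ q, T q.1 q.2 ∂ν.prod ν :=
    integral_prod_swap (fun q : E × E => T q.1 q.2)
  calc ∫ q, |f q.1 - f q.2| ^ p ∂ν.prod ν
      ≤ ∫ q, (2 * R) ^ p * (T q.2 q.1 + T q.1 q.2) ∂ν.prod ν :=
        integral_mono_of_nonneg (.of_forall fun _ => by positivity) ((hTswap.add hT).const_mul _)
          ((ae_mem_prod_of_ae_mem hν hν).mono fun q hq =>
            abs_sub_rpow_le_integral_halfSegment hp hf hq.1 hq.2)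
    _ = (2 * R) ^ p * (2 * ∫ x, ∫ y, T x y ∂ν ∂ν) := by
        rw [integral_const_mul, integral_add hTswap hT, hswap, integral_prod _ hT]
        ring

variable (μ : Measure E) [μ.IsAddHaarMeasure]

theorem Convex.setIntegral_comp_segment_le {s : Set E} (hs : Convex ℝ s) (hsm : MeasurableSet s)
    {ψ : E → ℝ} (hψ : IntegrableOn ψ s μ) (hψ0 : ∀ z ∈ s, 0 ≤ ψ z) {x : E} (hx : x ∈ s)
    {t : ℝ} (ht : t ∈ Ioc (0:ℝ) 1) :
    ∫ y in s, ψ ((1 - t) • x + t • y) ∂μ ≤ (t ^ finrank ℝ E)⁻¹ * ∫ z in s, ψ z ∂μ := by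
  set H := s.indicator ψ
  have hH : Integrable H μ := hψ.integrable_indicator hsm
  calc ∫ y in s, ψ ((1 - t) • x + t • y) ∂μ = ∫ y in s, H ((1 - t) • x + t • y) ∂μ :=
        setIntegral_congr_fun hsm fun y hy =>
          (indicator_of_mem (hs hx hy (by linarith [ht.2]) ht.1.le (by ring)) ψ).symm
    _ ≤ ∫ y, H (t • y + (1 - t) • x) ∂μ := by
        simp_rw [add_comm ((1 - t) • x)]
        exact setIntegral_le_integral ((hH.comp_add_right _).comp_smul ht.1.ne')
          (.of_forall fun _ => indicator_nonneg hψ0 _)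
    _ = (t ^ finrank ℝ E)⁻¹ * ∫ z in s, ψ z ∂μ := by
        rw [Measure.integral_comp_smul_of_nonneg μ (fun z => H (z + (1 - t) • x)) t
          (hR := ht.1.le), integral_add_right_eq_self, smul_eq_mul, integral_indicator hsm]

theorem setIntegral_ball_comp_norm_div (g : ℝ → ℝ) {R : ℝ} (hR : 0 < R) :
    ∫ x in ball (0:E) R, g (‖x‖ / R) ∂μ = R ^ finrank ℝ E * ∫ x in ball (0:E) 1, g ‖x‖ ∂μ := by
  have := Measure.setIntegral_comp_smul_of_pos μ (fun u => g ‖u‖) (ball (0:E) R) (inv_pos.2 hR)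
  rw [_root_.smul_ball (inv_ne_zero hR.ne'), smul_zero, norm_inv, Real.norm_of_nonneg hR.le,
    inv_mul_cancel₀ hR.ne', inv_pow, inv_inv, smul_eq_mul] at this
  simpa [norm_smul, div_eq_inv_mul, abs_of_pos hR] using this

theorem integrable_mul_comp_segment_prod {φ w : E → ℝ} {R C : ℝ}
    (hφ : ContinuousOn φ (ball 0 R)) (hw : Measurable w)
    (hC : ∀ z ∈ ball (0:E) R, ‖φ z * w z‖ ≤ C) {x : E} (hx : x ∈ ball (0:E) R) :
    Integrable (fun q : E × ℝ => φ ((1 - q.2) • x + q.2 • q.1) * w ((1 - q.2) • x + q.2 • q.1))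
      ((μ.restrict (ball 0 R)).prod (volume.restrict (Ioc (2⁻¹:ℝ) 1))) := by
  have hBI : MeasurableSet (ball (0:E) R ×ˢ Ioc (2⁻¹:ℝ) 1) :=
    measurableSet_ball.prod measurableSet_Ioc
  have hz : MapsTo (fun q : E × ℝ => (1 - q.2) • x + q.2 • q.1) (ball 0 R ×ˢ Ioc (2⁻¹:ℝ) 1)
      (ball 0 R) := fun q hq =>
    convex_ball (0:E) R hx hq.1 (by linarith [hq.2.2]) (by linarith [hq.2.1]) (by ring)
  rw [Measure.prod_restrict]
  refine IntegrableOn.of_bound ?_ ?_ C ((ae_restrict_mem hBI).mono fun q hq => hC _ (hz hq))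
  · rw [Measure.prod_prod]
    exact ENNReal.mul_lt_top measure_ball_lt_top measure_Ioc_lt_top
  · exact (hφ.comp (by fun_prop) hz).aestronglyMeasurable hBI
      |>.mul (hw.comp (by fun_prop)).aestronglyMeasurable

theorem ContinuousOn.exists_norm_mul_le_of_le {X : Type*} [PseudoMetricSpace X] [ProperSpace X]
    {φ w : X → ℝ} {c : X} {R K : ℝ} (hφ : ContinuousOn φ (closedBall c R)) (hw0 : ∀ x, 0 ≤ w x)
    (hwK : ∀ x ∈ ball c R, w x ≤ K) : ∃ C, ∀ z ∈ ball c R, ‖φ z * w z‖ ≤ C := by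
  obtain ⟨C, hC⟩ := (isCompact_closedBall c R).exists_bound_of_continuousOn hφ
  refine ⟨C * K, fun z hz => ?_⟩
  rw [norm_mul, Real.norm_of_nonneg (hw0 z)]
  exact mul_le_mul (hC z (ball_subset_closedBall hz)) (hwK z hz) (hw0 z)
    ((norm_nonneg _).trans (hC z (ball_subset_closedBall hz)))

variable {R K : ℝ} {w : E → ℝ}

theorem mul_integral_mul_integral_halfSegment_le {φ : E → ℝ}
    (hφ : ContinuousOn φ (closedBall 0 R)) (hφ0 : ∀ z, 0 ≤ φ z) (hw : Measurable w)
    (hw0 : ∀ x, 0 ≤ w x) (hwK : ∀ x ∈ ball (0:E) R, w x ≤ K)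
    (hseg : ∀ x ∈ ball (0:E) R, ∀ y ∈ ball (0:E) R, ∀ t ∈ Icc (0:ℝ) 1,
      w x * w y ≤ K * w ((1 - t) • x + t • y))
    {x : E} (hx : x ∈ ball (0:E) R) :
    w x * ∫ y in ball (0:E) R, w y * (∫ t in Ioc (2⁻¹:ℝ) 1, φ ((1 - t) • x + t • y)) ∂μ ≤
      K * (2 ^ finrank ℝ E / 2) * ∫ z in ball (0:E) R, φ z * w z ∂μ := by
  set B := ball (0:E) R
  set J := ∫ z in B, φ z * w z ∂μ
  set U : E × ℝ → ℝ := fun q => φ ((1 - q.2) • x + q.2 • q.1) * w ((1 - q.2) • x + q.2 • q.1)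
  have hK : 0 ≤ K := (hw0 x).trans (hwK x hx)
  have hJ : 0 ≤ J := setIntegral_nonneg measurableSet_ball fun z _ => mul_nonneg (hφ0 z) (hw0 z)
  obtain ⟨C, hφwB⟩ := hφ.exists_norm_mul_le_of_le hw0 hwK
  have hφw : IntegrableOn (fun z => φ z * w z) B μ := .of_bound measure_ball_lt_top
    (((hφ.mono ball_subset_closedBall).aestronglyMeasurable measurableSet_ball).mul
      hw.aestronglyMeasurable) C ((ae_restrict_mem measurableSet_ball).mono hφwB)
  have hU : Integrable U ((μ.restrict B).prod (volume.restrict (Ioc (2⁻¹:ℝ) 1))) :=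
    integrable_mul_comp_segment_prod μ (hφ.mono ball_subset_closedBall) hw hφwB hx
  have hslice (t : ℝ) (ht : t ∈ Ioc (2⁻¹:ℝ) 1) : ∫ y in B, U (y, t) ∂μ ≤ 2 ^ finrank ℝ E * J := by
    refine (Convex.setIntegral_comp_segment_le μ (convex_ball 0 R) measurableSet_ball hφw
      (fun z _ => mul_nonneg (hφ0 z) (hw0 z)) hx ⟨lt_trans (by norm_num) ht.1, ht.2⟩).trans
      (mul_le_mul_of_nonneg_right ?_ hJ)
    rw [← inv_pow]
    exact pow_le_pow_left₀ (inv_nonneg.2 (by linarith [ht.1])) (inv_le_of_inv_le₀ two_pos ht.1.le) _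
  calc w x * ∫ y in B, w y * (∫ t in Ioc (2⁻¹:ℝ) 1, φ ((1 - t) • x + t • y)) ∂μ
      = ∫ y in B, w x * (w y * (∫ t in Ioc (2⁻¹:ℝ) 1, φ ((1 - t) • x + t • y))) ∂μ :=
        (integral_const_mul _ _).symm
    _ ≤ ∫ y in B, K * (∫ t in Ioc (2⁻¹:ℝ) 1, U (y, t)) ∂μ := by
        refine integral_mono_of_nonneg (.of_forall fun y => mul_nonneg (hw0 x)
          (mul_nonneg (hw0 y) (setIntegral_nonneg measurableSet_Ioc fun _ _ => hφ0 _)))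
          (hU.integral_prod_left.const_mul K) ?_
        filter_upwards [ae_restrict_mem measurableSet_ball, hU.prod_right_ae] with y hy hUy
        exact mul_mul_integral_halfSegment_le hφ0 hw0 (hseg x hx y hy) hUy
    _ = K * ∫ t in Ioc (2⁻¹:ℝ) 1, ∫ y in B, U (y, t) ∂μ := by
        rw [integral_const_mul, integral_integral_swap hU]
    _ ≤ K * ∫ t in Ioc (2⁻¹:ℝ) 1, 2 ^ finrank ℝ E * J :=
        mul_le_mul_of_nonneg_left (integral_mono_of_nonneg
          (.of_forall fun t => setIntegral_nonneg measurableSet_ball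
            fun y _ => mul_nonneg (hφ0 _) (hw0 _))
          (integrableOn_const measure_Ioc_lt_top.ne)
          ((ae_restrict_mem measurableSet_Ioc).mono hslice)) hK
    _ = K * (2 ^ finrank ℝ E / 2) * J := by
        rw [setIntegral_const, measureReal_def, Real.volume_Ioc,
          ENNReal.toReal_ofReal (by norm_num), smul_eq_mul]
        ring

theorem integral_abs_sub_rpow_mul_le_of_segment_weight {f : E → ℝ} {p : ℝ} (hp : 1 ≤ p)
    (hR : 0 < R) (hw : Measurable w) (hw0 : ∀ x, 0 ≤ w x) (hwK : ∀ x ∈ ball (0:E) R, w x ≤ K)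
    (hw1 : ∫ x in ball (0:E) R, w x ∂μ = 1)
    (hseg : ∀ x ∈ ball (0:E) R, ∀ y ∈ ball (0:E) R, ∀ t ∈ Icc (0:ℝ) 1,
      w x * w y ≤ K * w ((1 - t) • x + t • y))
    (hf : ContDiffOn ℝ 1 f (closedBall 0 R)) :
    ∫ x in ball (0:E) R, |f x - ∫ y in ball (0:E) R, f y * w y ∂μ| ^ p * w x ∂μ ≤
      (2 * R) ^ p * 2 ^ finrank ℝ E * K * μ.real (ball (0:E) R) *
        ∫ x in ball (0:E) R, ‖fderivWithin ℝ f (closedBall 0 R) x‖ ^ p * w x ∂μ := by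
  set B := ball (0:E) R
  set T : E → E → ℝ := fun x y =>
    ∫ t in Ioc (2⁻¹:ℝ) 1, ‖fderivWithin ℝ f (closedBall 0 R) ((1 - t) • x + t • y)‖ ^ p
  set J := ∫ x in B, ‖fderivWithin ℝ f (closedBall 0 R) x‖ ^ p * w x ∂μ
  set ν := (μ.restrict B).withDensity fun x => ENNReal.ofReal (w x)
  have hν (φ : E → ℝ) : ∫ x, φ x ∂ν = ∫ x in B, w x * φ x ∂μ :=
    integral_withDensity_ofReal hw hw0 φ
  have : IsProbabilityMeasure ν := isProbabilityMeasure_withDensity_ofReal (.of_forall hw0) hw1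
  have hνB : ∀ᵐ x ∂ν, x ∈ B :=
    (withDensity_absolutelyContinuous _ _).ae_le (ae_restrict_mem measurableSet_ball)
  have hνS : ∀ᵐ x ∂ν, x ∈ closedBall (0:E) R := hνB.mono fun _ hx => ball_subset_closedBall hx
  obtain ⟨M, hM⟩ := (isCompact_closedBall (0:E) R).exists_bound_of_continuousOn hf.continuousOn
  have hfν : AEStronglyMeasurable f ν := by
    rw [← Measure.restrict_eq_self_of_ae_mem hνS]
    exact hf.continuousOn.aestronglyMeasurable measurableSet_closedBall
  have hG : ContinuousOn (fun z => ‖fderivWithin ℝ f (closedBall 0 R) z‖ ^ p) (closedBall 0 R) :=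
    (hf.continuousOn_fderivWithin_closedBall hR).norm.rpow_const fun _ _ => Or.inr (by linarith)
  have hinner : ∀ᵐ x ∂μ.restrict B,
      w x * ∫ y in B, w y * T x y ∂μ ≤ K * (2 ^ finrank ℝ E / 2) * J :=
    (ae_restrict_mem measurableSet_ball).mono fun x hx =>
      mul_integral_mul_integral_halfSegment_le μ hG (fun _ => by positivity) hw hw0 hwK hseg hx
  calc ∫ x in B, |f x - ∫ y in B, f y * w y ∂μ| ^ p * w x ∂μ
      = ∫ x, |f x - ∫ y, f y ∂ν| ^ p ∂ν := by simp only [hν, mul_comm (w _)]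
    _ ≤ ∫ q, |f q.1 - f q.2| ^ p ∂ν.prod ν :=
        integral_abs_sub_integral_rpow_le_integral_prod hp hfν (hνS.mono fun x hx => hM x hx)
    _ ≤ (2 * R) ^ p * (2 * ∫ x, ∫ y, T x y ∂ν ∂ν) := integral_prod_abs_sub_rpow_le hp hR hf hνB
    _ = (2 * R) ^ p * (2 * ∫ x in B, w x * ∫ y in B, w y * T x y ∂μ ∂μ) := by simp only [hν]
    _ ≤ (2 * R) ^ p * (2 * ∫ x in B, K * (2 ^ finrank ℝ E / 2) * J ∂μ) := by
        refine mul_le_mul_of_nonneg_left (mul_le_mul_of_nonneg_left ?_ two_pos.le) (by positivity)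
        exact integral_mono_of_nonneg (.of_forall fun x => mul_nonneg (hw0 x)
          (setIntegral_nonneg measurableSet_ball fun y _ => mul_nonneg (hw0 y) (by positivity)))
          (integrableOn_const measure_ball_lt_top.ne) hinner
    _ = _ := by
        rw [setIntegral_const, smul_eq_mul]
        ring

end Haar

section RadialWeight

variable {E : Type*} [NormedAddCommGroup E] [NormedSpace ℝ E] {g : ℝ → ℝ} {R : ℝ}

/-- `Λ_R` of the paper, for the radial profile `Λ(x) = g ‖x‖`. -/
def radialWeight (g : ℝ → ℝ) (R : ℝ) (x : E) : ℝ := (R ^ finrank ℝ E)⁻¹ * g (‖x‖ / R)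

theorem radialWeight_nonneg (hg : ∀ s, 0 ≤ g s) (hR : 0 ≤ R) (x : E) :
    0 ≤ radialWeight g R x :=
  mul_nonneg (inv_nonneg.2 (pow_nonneg hR _)) (hg _)

theorem radialWeight_le (hg : ∀ s, g s ≤ 1) (hR : 0 ≤ R) (x : E) :
    radialWeight g R x ≤ (R ^ finrank ℝ E)⁻¹ :=
  mul_le_of_le_one_right (inv_nonneg.2 (pow_nonneg hR _)) (hg _)

theorem radialWeight_mul_le (hg : Antitone g) (hg01 : ∀ s, g s ∈ Icc (0:ℝ) 1) (hR : 0 < R)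
    (x y : E) {t : ℝ} (ht : t ∈ Icc (0:ℝ) 1) :
    radialWeight g R x * radialWeight g R y ≤
      (R ^ finrank ℝ E)⁻¹ * radialWeight g R ((1 - t) • x + t • y) := by
  have hgR : Antitone fun s => g (s / R) :=
    hg.comp_monotone fun a b h => div_le_div_of_nonneg_right h hR.le
  simp only [radialWeight]
  calc (R ^ finrank ℝ E)⁻¹ * g (‖x‖ / R) * ((R ^ finrank ℝ E)⁻¹ * g (‖y‖ / R))
      = (R ^ finrank ℝ E)⁻¹ * ((R ^ finrank ℝ E)⁻¹ * (g (‖x‖ / R) * g (‖y‖ / R))) := by ring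
    _ ≤ _ := by gcongr; exact hgR.mul_le_comp_norm_segment (fun _ => hg01 _) x y ht

variable [MeasurableSpace E] [BorelSpace E]

theorem Measurable.radialWeight (hg : Measurable g) : Measurable (radialWeight (E := E) g R) :=
  (hg.comp (by fun_prop)).const_mul _

variable [FiniteDimensional ℝ E] (μ : Measure E) [μ.IsAddHaarMeasure]

theorem setIntegral_radialWeight (hR : 0 < R) :
    ∫ x in ball (0:E) R, radialWeight g R x ∂μ = ∫ x in ball (0:E) 1, g ‖x‖ ∂μ := by
  simp only [radialWeight]
  rw [integral_const_mul, setIntegral_ball_comp_norm_div μ g hR,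
    inv_mul_cancel_left₀ (pow_pos hR _).ne']

theorem integral_abs_sub_rpow_mul_radial_le {lam : ℝ → ℝ} {p : ℝ} (hp : 1 ≤ p) (hR : 0 < R)
    (hmono : AntitoneOn lam (Ico 0 1)) (hrange : MapsTo lam (Ico 0 1) (Icc 0 1))
    (hnorm : ∫ x in ball (0:E) 1, lam ‖x‖ ∂μ = 1) {f : E → ℝ}
    (hf : ContDiffOn ℝ 1 f (closedBall 0 R)) :
    ∫ x in ball (0:E) R, |f x - ∫ y in ball (0:E) R,
        f y * ((R ^ finrank ℝ E)⁻¹ * lam (‖y‖ / R)) ∂μ| ^ p *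
          ((R ^ finrank ℝ E)⁻¹ * lam (‖x‖ / R)) ∂μ ≤
      (2 * R) ^ p * 2 ^ finrank ℝ E * μ.real (ball (0:E) 1) *
        ∫ x in ball (0:E) R, ‖fderivWithin ℝ f (closedBall 0 R) x‖ ^ p *
          ((R ^ finrank ℝ E)⁻¹ * lam (‖x‖ / R)) ∂μ := by
  obtain ⟨g, hg, hg01, hlam⟩ := hmono.exists_antitone_extension_mapsTo_Icc hrange zero_le_one
  have hlam_ball {r : ℝ} (hr : 0 < r) {x : E} (hx : x ∈ ball (0:E) r) :
      lam (‖x‖ / r) = g (‖x‖ / r) :=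
    hlam ⟨by positivity, (div_lt_one hr).2 (mem_ball_zero_iff.1 hx)⟩
  have hweight {x : E} (hx : x ∈ ball (0:E) R) :
      (R ^ finrank ℝ E)⁻¹ * lam (‖x‖ / R) = radialWeight g R x := by
    rw [hlam_ball hR hx, radialWeight]
  have hw1 : ∫ x in ball (0:E) R, radialWeight g R x ∂μ = 1 := by
    rw [setIntegral_radialWeight μ hR]
    refine (setIntegral_congr_fun measurableSet_ball fun x hx => ?_).trans hnorm
    simpa using (hlam_ball one_pos hx).symm
  have hmean : ∫ y in ball (0:E) R, f y * ((R ^ finrank ℝ E)⁻¹ * lam (‖y‖ / R)) ∂μ =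
      ∫ y in ball (0:E) R, f y * radialWeight g R y ∂μ :=
    setIntegral_congr_fun measurableSet_ball fun y hy => by rw [hweight hy]
  have hgrad : ∫ x in ball (0:E) R, ‖fderivWithin ℝ f (closedBall 0 R) x‖ ^ p *
        ((R ^ finrank ℝ E)⁻¹ * lam (‖x‖ / R)) ∂μ =
      ∫ x in ball (0:E) R, ‖fderivWithin ℝ f (closedBall 0 R) x‖ ^ p * radialWeight g R x ∂μ :=
    setIntegral_congr_fun measurableSet_ball fun x hx => by rw [hweight hx]
  have hball : μ.real (ball (0:E) R) = R ^ finrank ℝ E * μ.real (ball (0:E) 1) := by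
    rw [measureReal_def, Measure.addHaar_ball_of_pos μ _ hR, ENNReal.toReal_mul,
      ENNReal.toReal_ofReal (by positivity), measureReal_def]
  rw [hmean, hgrad]
  calc _ = ∫ x in ball (0:E) R, |f x - ∫ y in ball (0:E) R, f y * radialWeight g R y ∂μ| ^ p *
        radialWeight g R x ∂μ :=
        setIntegral_congr_fun measurableSet_ball fun x hx => by rw [hweight hx]
    _ ≤ _ := integral_abs_sub_rpow_mul_le_of_segment_weight μ hp hR hg.measurable.radialWeight
          (radialWeight_nonneg (fun s => (hg01 s).1) hR.le)
          (fun x _ => radialWeight_le (fun s => (hg01 s).2) hR.le x) hw1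
          (fun x _ y _ t ht => radialWeight_mul_le hg hg01 hR x y ht) hf
    _ = _ := by
        rw [hball]
        field_simp

end RadialWeight

theorem volume_real_ball_fin_three_le_eight : volume.real (ball (0:E3) 1) ≤ 8 := by
  rw [measureReal_def, EuclideanSpace.volume_ball_fin_three, ENNReal.toReal_mul,
    ENNReal.toReal_pow, ENNReal.toReal_ofReal zero_le_one, ENNReal.toReal_ofReal (by positivity)]
  linarith [pi_le_four]

/-- weighted Poincaré inequality on `B(R) ⊂ ℝ³` with a radially
nonincreasing probability weight. -/
theorem weighted_poincare (p : ℝ) (hp : 1 ≤ p) (R : ℝ) (hR : 0 < R)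
    (lam : ℝ → ℝ)
    (hmono : ∀ s₁ ∈ Ico (0:ℝ) 1, ∀ s₂ ∈ Ico (0:ℝ) 1, s₁ ≤ s₂ → lam s₂ ≤ lam s₁)
    (hrange : ∀ s ∈ Ico (0:ℝ) 1, lam s ∈ Icc (0:ℝ) 1)
    (hnorm : (∫ x in Metric.ball (0:E3) 1, lam ‖x‖) = 1)
    (f : E3 → ℝ) (hf : ContDiffOn ℝ 1 f (Metric.closedBall (0:E3) R)) :
    (∫ x in Metric.ball (0:E3) R,
        |f x - ∫ y in Metric.ball (0:E3) R, f y * ((R ^ 3)⁻¹ * lam (‖y‖ / R))| ^ p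
          * ((R ^ 3)⁻¹ * lam (‖x‖ / R)))
      ≤ 2 ^ (p + 6) * R ^ p *
        ∫ x in Metric.ball (0:E3) R,
          ‖fderivWithin ℝ f (Metric.closedBall (0:E3) R) x‖ ^ p
            * ((R ^ 3)⁻¹ * lam (‖x‖ / R)) := by
  have h := integral_abs_sub_rpow_mul_radial_le volume hp hR hmono hrange hnorm hf
  rw [finrank_euclideanSpace_fin] at h
  refine h.trans (mul_le_mul_of_nonneg_right ?_ (setIntegral_nonneg measurableSet_ball
    fun x hx => mul_nonneg (by positivity) (mul_nonneg (by positivity) (hrange _ ⟨by positivity,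
      (div_lt_one hR).2 (mem_ball_zero_iff.1 hx)⟩).1)))
  calc (2 * R) ^ p * 2 ^ 3 * volume.real (ball (0:E3) 1) ≤ (2 * R) ^ p * 2 ^ 3 * 8 := by
        gcongr
        exact volume_real_ball_fin_three_le_eight
    _ = 2 ^ (p + 6) * R ^ p := by
        rw [mul_rpow two_pos.le hR.le, rpow_add two_pos, show (6:ℝ) = (6:ℕ) by norm_num,
          rpow_natCast]
        ring
end
end
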